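/- arXiv:1107.1910 — 5 statements merged into one kernel-verified Lean document; each statement's English description precedes it below -/
import Mathlib

section
/- Let A be an invertible n×n real matrix with |det A| > 0, such that each column of A has Euclidean norm at most C. Then the operator norm of A⁻¹ satisfies ‖A⁻¹‖ ≤ n · C^(n-1) / |det A|. -/
/-!
Since `A⁻¹ = (det A)⁻¹ • adj A` and the entry `adj A i j` is the determinant of `A` with its
`i`-th column replaced by the basis vector `e_j`, Hadamard's inequality bounds every entry of
`adj A` by `C ^ (n - 1)`. The Euclidean operator norm is at most the Frobenius norm, so a matrix
whose entries are bounded by `K` has operator norm at most `n * K`.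
-/

open Matrix

lemma Matrix.abs_det_le_prod_sqrt_sum_sq_col {n : ℕ} (M : Matrix (Fin n) (Fin n) ℝ) :
    |M.det| ≤ ∏ j, √(∑ i, M i j ^ 2) := by
  have : Fact (Module.finrank ℝ (EuclideanSpace ℝ (Fin n)) = n) := ⟨finrank_euclideanSpace_fin⟩
  let b := EuclideanSpace.basisFun (Fin n) ℝ
  let col : Fin n → EuclideanSpace ℝ (Fin n) := fun j => WithLp.toLp 2 (Mᵀ j)
  have hdet : b.toBasis.det col = M.det := by
    rw [Module.Basis.det_apply]
    congr 1
  have hnorm : ∀ j, ‖col j‖ = √(∑ i, M i j ^ 2) := fun j => by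
    simp [col, EuclideanSpace.norm_eq]
  rw [← hdet, ← b.toBasis.orientation.volumeForm_robust b rfl]
  simpa only [hnorm] using b.toBasis.orientation.abs_volumeForm_apply_le col

lemma Matrix.adjugate_apply_eq_det_updateCol {ι α : Type*} [Fintype ι] [DecidableEq ι] [CommRing α]
    (A : Matrix ι ι α) (i j : ι) : A.adjugate i j = (A.updateCol i (Pi.single j 1)).det := by
  rw [← transpose_apply A.adjugate, adjugate_transpose, adjugate_apply, updateRow_transpose,
    det_transpose]

lemma Matrix.abs_adjugate_apply_le_pow {n : ℕ} (A : Matrix (Fin n) (Fin n) ℝ) {C : ℝ}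
    (hcol : ∀ j, √(∑ i, A i j ^ 2) ≤ C) (i j : Fin n) : |A.adjugate i j| ≤ C ^ (n - 1) := by
  set A' := A.updateCol i (Pi.single j 1)
  have hcol_i : √(∑ l, A' l i ^ 2) = 1 := by simp [A', Pi.single_apply]
  have hcol_ne : ∀ k ∈ Finset.univ.erase i, √(∑ l, A' l k ^ 2) ≤ C := fun k hk => by
    simpa [A', updateCol_ne (Finset.ne_of_mem_erase hk)] using hcol k
  calc |A.adjugate i j| = |A'.det| := by rw [adjugate_apply_eq_det_updateCol]
    _ ≤ ∏ k, √(∑ l, A' l k ^ 2) := abs_det_le_prod_sqrt_sum_sq_col A'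
    _ = ∏ k ∈ Finset.univ.erase i, √(∑ l, A' l k ^ 2) := by
      rw [← Finset.mul_prod_erase _ _ (Finset.mem_univ i), hcol_i, one_mul]
    _ ≤ ∏ _k ∈ Finset.univ.erase i, C :=
      Finset.prod_le_prod (fun _ _ => Real.sqrt_nonneg _) hcol_ne
    _ = C ^ (n - 1) := by simp [Finset.card_erase_of_mem]

lemma Matrix.abs_inv_apply_le {ι : Type*} [Fintype ι] [DecidableEq ι] (A : Matrix ι ι ℝ) {K : ℝ}
    (hadj : ∀ i j, |A.adjugate i j| ≤ K) (i j : ι) : |A⁻¹ i j| ≤ K / |A.det| := by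
  rw [inv_def, Ring.inverse_eq_inv', smul_apply, smul_eq_mul, abs_mul, abs_inv, inv_mul_eq_div]
  exact div_le_div_of_nonneg_right (hadj i j) (abs_nonneg _)

lemma Matrix.norm_toEuclideanCLM_le_sqrt_sum_sq {ι : Type*} [Fintype ι] [DecidableEq ι]
    (B : Matrix ι ι ℝ) : ‖toEuclideanCLM (𝕜 := ℝ) B‖ ≤ √(∑ i, ∑ j, B i j ^ 2) := by
  refine ContinuousLinearMap.opNorm_le_bound _ (Real.sqrt_nonneg _) fun x => ?_
  rw [EuclideanSpace.norm_eq, ← Real.sqrt_sq (norm_nonneg x), ← Real.sqrt_mul (by positivity),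
    Finset.sum_mul]
  refine Real.sqrt_le_sqrt (Finset.sum_le_sum fun i _ => ?_)
  rw [Real.norm_eq_abs, sq_abs, EuclideanSpace.real_norm_sq_eq]
  exact Finset.sum_mul_sq_le_sq_mul_sq _ _ _

lemma Matrix.norm_toEuclideanCLM_le_card_mul {ι : Type*} [Fintype ι] [DecidableEq ι]
    (B : Matrix ι ι ℝ) {K : ℝ} (hB : ∀ i j, |B i j| ≤ K) :
    ‖toEuclideanCLM (𝕜 := ℝ) B‖ ≤ Fintype.card ι * K := by
  rcases isEmpty_or_nonempty ι with _ | ⟨⟨i₀⟩⟩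
  · simp [ContinuousLinearMap.opNorm_subsingleton]
  have hK : 0 ≤ K := (abs_nonneg _).trans (hB i₀ i₀)
  calc ‖toEuclideanCLM (𝕜 := ℝ) B‖ ≤ √(∑ i, ∑ j, B i j ^ 2) :=
        norm_toEuclideanCLM_le_sqrt_sum_sq B
    _ ≤ √(∑ _i : ι, ∑ _j : ι, K ^ 2) := by
      refine Real.sqrt_le_sqrt (Finset.sum_le_sum fun i _ => Finset.sum_le_sum fun j _ => ?_)
      exact sq_le_sq.mpr ((hB i j).trans (le_abs_self K))
    _ = Fintype.card ι * K := by
      rw [Finset.sum_const, Finset.sum_const, Finset.card_univ, nsmul_eq_mul, nsmul_eq_mul,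
        ← mul_assoc, ← sq, Real.sqrt_mul (by positivity), Real.sqrt_sq (by positivity),
        Real.sqrt_sq hK]

theorem stmt_0_general (n : ℕ) (A : Matrix (Fin n) (Fin n) ℝ) (C : ℝ)
    (hcol : ∀ j, Real.sqrt (∑ i, (A i j) ^ 2) ≤ C) :
    ‖Matrix.toEuclideanCLM (𝕜 := ℝ) A⁻¹‖ ≤ n * C ^ (n - 1) / |A.det| := by
  have hinv := A.abs_inv_apply_le (A.abs_adjugate_apply_le_pow hcol)
  simpa only [Fintype.card_fin, mul_div_assoc] using norm_toEuclideanCLM_le_card_mul _ hinv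

/-- Hadamard-type estimate: if `A` is an `n × n` real matrix with `|det A| > 0` whose
columns have Euclidean norm at most `C`, then the operator norm (with respect to the
Euclidean norm on `ℝⁿ`) of `A⁻¹` satisfies `‖A⁻¹‖ ≤ n · C^(n-1) / |det A|`. -/
theorem stmt_0 (n : ℕ) (A : Matrix (Fin n) (Fin n) ℝ) (C : ℝ)
    (hdet : 0 < |A.det|)
    (hcol : ∀ j, Real.sqrt (∑ i, (A i j) ^ 2) ≤ C) :
    ‖Matrix.toEuclideanCLM (𝕜 := ℝ) A⁻¹‖ ≤ n * C ^ (n - 1) / |A.det| :=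
  stmt_0_general n A C hcol
end

section
/- Let {y₀, …, yₙ} ⊂ ℝⁿ be a ρ-robust collection (for each 0 ≤ k < n, the distance from y_{k+1} to the affine subspace spanned by {y₀, …, yₖ} is at least ρ). Then the parallelepiped P with edges yᵢ − y₀, 1 ≤ i ≤ n, has n-dimensional volume at least ρ^(n−1) · ‖y₁ − y₀‖. -/
/-!
Apply Gram–Schmidt to the edges `vᵢ = yᵢ₊₁ − y₀`. The volume of the parallelepiped is the
product of the norms of the Gram–Schmidt vectors `gₖ`, and `‖gₖ‖` is at least the distance from
`vₖ` to the span of the earlier edges, i.e. from `yₖ₊₁` to the affine span of `y₀, …, yₖ`, which is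
at least `ρ`. The first factor is `‖g₀‖ = ‖y₁ − y₀‖`.
-/

open Finset Submodule MeasureTheory Module InnerProductSpace
open scoped EuclideanSpace

section GramSchmidt

variable {𝕜 E ι : Type*} [RCLike 𝕜] [NormedAddCommGroup E] [InnerProductSpace 𝕜 E]
  [LinearOrder ι] [LocallyFiniteOrderBot ι] [WellFoundedLT ι]

theorem inner_gramSchmidt_self_eq_norm_sq (f : ι → E) (i : ι) :
    inner 𝕜 (gramSchmidt 𝕜 f i) (f i) = (‖gramSchmidt 𝕜 f i‖ : 𝕜) ^ 2 := by
  conv_lhs => rw [gramSchmidt_def' 𝕜 f i]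
  rw [inner_add_right, inner_self_eq_norm_sq_to_K, inner_sum, Finset.sum_eq_zero, add_zero]
  intro j hj
  rw [starProjection_singleton, inner_smul_right,
    gramSchmidt_orthogonal 𝕜 f (Finset.mem_Iio.mp hj).ne', mul_zero]

theorem inner_gramSchmidtOrthonormalBasis_self [Fintype ι] [FiniteDimensional 𝕜 E]
    (h : finrank 𝕜 E = Fintype.card ι) (f : ι → E) (i : ι) :
    inner 𝕜 (gramSchmidtOrthonormalBasis h f i) (f i) = (‖gramSchmidt 𝕜 f i‖ : 𝕜) := by
  by_cases hi : gramSchmidtNormed 𝕜 f i = 0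
  · have hg : gramSchmidt 𝕜 f i = 0 := by simpa [gramSchmidtNormed] using hi
    rw [inner_gramSchmidtOrthonormalBasis_eq_zero h hi, hg, norm_zero, RCLike.ofReal_zero]
  · have hg : gramSchmidt 𝕜 f i ≠ 0 := fun hg => hi (by simp [gramSchmidtNormed, hg])
    rw [gramSchmidtOrthonormalBasis_apply h hi, gramSchmidtNormed, inner_smul_left,
      inner_gramSchmidt_self_eq_norm_sq]
    simp only [map_inv₀, RCLike.conj_ofReal]
    field_simp

theorem infDist_span_image_Iio_le_norm_gramSchmidt (f : ι → E) (i : ι) :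
    Metric.infDist (f i) (span 𝕜 (f '' Set.Iio i)) ≤ ‖gramSchmidt 𝕜 f i‖ := by
  have hmem : f i - gramSchmidt 𝕜 f i ∈ span 𝕜 (f '' Set.Iio i) := by
    rw [← span_gramSchmidt_Iio, gramSchmidt_def' 𝕜 f i, add_sub_cancel_left]
    refine Submodule.sum_mem _ fun j hj => ?_
    rw [starProjection_singleton]
    exact smul_mem _ _ (subset_span ⟨j, Finset.mem_Iio.mp hj, rfl⟩)
  simpa [dist_eq_norm] using Metric.infDist_le_dist_of_mem (x := f i) hmem

end GramSchmidt

section Volume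

variable {E : Type*} [NormedAddCommGroup E] [InnerProductSpace ℝ E] {n : ℕ}
  [Fact (finrank ℝ E = n)]

theorem Orientation.abs_volumeForm_apply_eq_prod_norm_gramSchmidt (o : Orientation ℝ E (Fin n))
    (v : Fin n → E) : |o.volumeForm v| = ∏ i, ‖gramSchmidt ℝ v i‖ := by
  rcases n with - | n
  · refine o.eq_or_eq_neg_of_isEmpty.elim ?_ ?_ <;> rintro rfl <;> simp
  have : FiniteDimensional ℝ E := .of_fact_finrank_eq_succ n
  have hdim : finrank ℝ E = Fintype.card (Fin (n + 1)) := by simpa using (Fact.out : _ = n + 1)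
  rw [o.volumeForm_robust' (gramSchmidtOrthonormalBasis hdim v), gramSchmidtOrthonormalBasis_det,
    Finset.abs_prod]
  simp_rw [inner_gramSchmidtOrthonormalBasis_self, RCLike.ofReal_real_eq_id, id, abs_norm]

theorem volume_parallelepiped_eq_prod_norm_gramSchmidt [FiniteDimensional ℝ E]
    [MeasurableSpace E] [BorelSpace E] (v : Fin n → E) :
    volume (parallelepiped v) = ENNReal.ofReal (∏ i, ‖gramSchmidt ℝ v i‖) := by
  let o := (finBasisOfFinrankEq ℝ E (Fact.out : finrank ℝ E = n)).orientation
  rw [← o.measure_eq_volume, AlternatingMap.measure_parallelepiped,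
    o.abs_volumeForm_apply_eq_prod_norm_gramSchmidt]

end Volume

theorem infDist_le_infDist_sub_of_le_direction {E : Type*} [NormedAddCommGroup E] {k : Type*}
    [Ring k] [Module k E] {A : AffineSubspace k E} {S : Submodule k E} {p : E} (hp : p ∈ A)
    (hS : S ≤ A.direction) (q : E) :
    Metric.infDist q (A : Set E) ≤ Metric.infDist (q - p) (S : Set E) := by
  rw [← Metric.infDist_image (IsometryEquiv.addRight p).isometry (x := q - p) (t := S),
    IsometryEquiv.addRight_apply, sub_add_cancel]
  refine Metric.infDist_le_infDist_of_subset ?_ ⟨p, 0, S.zero_mem, zero_add p⟩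
  rintro _ ⟨w, hw, rfl⟩
  exact AffineSubspace.vadd_mem_of_mem_direction (hS hw) hp

theorem span_sub_image_Iio_le_direction_affineSpan {k E : Type*} [Ring k] [AddCommGroup E]
    [Module k E] {n : ℕ} (y : Fin (n + 1) → E) (j : Fin n) :
    span k ((fun i : Fin n => y i.succ - y 0) '' Set.Iio j) ≤
      (affineSpan k (y '' {i | i ≤ j.castSucc})).direction := by
  rw [span_le]
  rintro _ ⟨i, hij, rfl⟩
  have mem_affineSpan {l : Fin (n + 1)} (hl : l ≤ j.castSucc) :
      y l ∈ affineSpan k (y '' {i | i ≤ j.castSucc}) :=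
    subset_affineSpan k _ ⟨l, hl, rfl⟩
  exact AffineSubspace.vsub_mem_direction (mem_affineSpan (Fin.succ_le_castSucc_iff.mpr hij))
    (mem_affineSpan (Fin.zero_le _))

/-- If `{y₀, …, yₙ} ⊂ ℝⁿ` is a `ρ`-robust collection (for each `0 ≤ k < n`, the distance
from `y_{k+1}` to the affine subspace spanned by `{y₀, …, yₖ}` is at least `ρ`), then the
parallelepiped with edges `yᵢ − y₀`, `1 ≤ i ≤ n`, has `n`-dimensional volume at least
`ρ^(n−1) · ‖y₁ − y₀‖`. -/
theorem stmt_6 (n : ℕ) (y : Fin (n + 1) → EuclideanSpace ℝ (Fin n)) (ρ : ℝ) (hρ : 0 < ρ)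
    (hrobust : ∀ k : Fin n, ρ ≤ Metric.infDist (y k.succ)
      (affineSpan ℝ (y '' {i | i ≤ k.castSucc}) : Set (EuclideanSpace ℝ (Fin n)))) :
    ENNReal.ofReal (ρ ^ (n - 1) * ‖y 1 - y 0‖) ≤
      MeasureTheory.volume (parallelepiped fun i : Fin n => y i.succ - y 0) := by
  rcases n with _ | m
  · simp [Subsingleton.elim (1 : Fin 1) 0]
  set v : Fin (m + 1) → EuclideanSpace ℝ (Fin (m + 1)) := fun i => y i.succ - y 0
  have hv : ∀ k, ρ ≤ ‖gramSchmidt ℝ v k‖ := fun k => calc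
    ρ ≤ _ := hrobust k
    _ ≤ Metric.infDist (v k) (span ℝ (v '' Set.Iio k)) :=
      infDist_le_infDist_sub_of_le_direction (subset_affineSpan ℝ (y '' _) ⟨0, Fin.zero_le _, rfl⟩)
        (span_sub_image_Iio_le_direction_affineSpan y k) _
    _ ≤ ‖gramSchmidt ℝ v k‖ := infDist_span_image_Iio_le_norm_gramSchmidt v k
  have hv0 : gramSchmidt ℝ v 0 = y 1 - y 0 := gramSchmidt_bot ℝ v
  rw [volume_parallelepiped_eq_prod_norm_gramSchmidt, Fin.prod_univ_succ, hv0, mul_comm]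
  refine ENNReal.ofReal_le_ofReal (mul_le_mul_of_nonneg_left ?_ (norm_nonneg _))
  simpa using Finset.prod_le_prod (s := univ) (fun _ _ => hρ.le) (fun (i : Fin m) _ => hv i.succ)
end

section
/- Suppose z₀, …, zₙ ∈ ℝⁿ, ω ∈ ℝⁿ, and constants 0 < C₁ < r and C₂ > 0 satisfy: r − C₁ < ‖zₖ − ω‖ < r + C₁ for all 0 ≤ k ≤ n, and the matrix V with rows vₖ = z_{k−1} − zₙ (1 ≤ k ≤ n) is invertible with ‖V⁻¹‖ ≤ C₂. Then the points z₀, …, zₙ admit a circumscribed sphere with center ω* = (1/2)·V⁻¹·λ(V) + zₙ satisfying ‖ω − ω*‖ < 2√n · r · C₁ · C₂. -/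
/-!
Write `vᵢ = zᵢ₋₁ - zₙ` for the rows of `V`. The point `ω*` solves `⟪vᵢ, ω* - zₙ⟫ = ‖vᵢ‖² / 2`,
which by the polarization identity says exactly that `ω*` is as far from `zᵢ₋₁` as from `zₙ`.
Applying the same identity to `ω` gives `(V (ω - ω*))ᵢ = (‖ω - zₙ‖² - ‖ω - zᵢ₋₁‖²) / 2`; both
distances lie in `(r - C₁, r + C₁)`, so every coordinate is smaller than `2 r C₁` in absolute
value, hence `‖V (ω - ω*)‖ < 2 √n r C₁`, and `‖ω - ω*‖ ≤ ‖V⁻¹‖ ‖V (ω - ω*)‖` concludes.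
-/

open scoped Matrix RealInnerProductSpace

theorem norm_sub_sq_eq_add_sub_inner {E : Type*} [NormedAddCommGroup E] [InnerProductSpace ℝ E]
    (c p x : E) : ‖c - x‖ ^ 2 = ‖c - p‖ ^ 2 + ‖x - p‖ ^ 2 - 2 * ⟪x - p, c - p⟫ := by
  rw [show c - x = (c - p) - (x - p) by abel, norm_sub_sq_real, real_inner_comm]
  ring

theorem norm_sub_eq_norm_sub_of_two_mul_inner_eq {E : Type*} [NormedAddCommGroup E]
    [InnerProductSpace ℝ E] {c p x : E} (h : 2 * ⟪x - p, c - p⟫ = ‖x - p‖ ^ 2) :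
    ‖c - x‖ = ‖c - p‖ := by
  rw [← pow_left_inj₀ (norm_nonneg _) (norm_nonneg _) two_ne_zero,
    norm_sub_sq_eq_add_sub_inner c p x, h]
  ring

theorem abs_sq_sub_sq_lt_of_mem_Ioo {a b r C : ℝ} (hCr : C ≤ r)
    (ha : a ∈ Set.Ioo (r - C) (r + C)) (hb : b ∈ Set.Ioo (r - C) (r + C)) :
    |a ^ 2 - b ^ 2| < 4 * r * C := by
  obtain ⟨ha₁, ha₂⟩ := ha
  obtain ⟨hb₁, hb₂⟩ := hb
  rw [abs_lt]
  constructor <;> nlinarith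

theorem EuclideanSpace.norm_lt_sqrt_card_mul_of_forall_abs_lt {ι : Type*} [Fintype ι]
    [Nonempty ι] {M : ℝ} (w : EuclideanSpace ℝ ι) (hw : ∀ i, |w i| < M) :
    ‖w‖ < √(Fintype.card ι) * M := by
  have hM : 0 < M := (abs_nonneg _).trans_lt (hw (Classical.arbitrary ι))
  rw [EuclideanSpace.norm_eq, ← Real.sqrt_sq hM.le, ← Real.sqrt_mul (Nat.cast_nonneg _)]
  refine Real.sqrt_lt_sqrt (by positivity) ?_
  calc ∑ i, ‖w i‖ ^ 2 < ∑ _i : ι, M ^ 2 :=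
        Finset.sum_lt_sum_of_nonempty Finset.univ_nonempty fun i _ =>
          pow_lt_pow_left₀ (by rw [Real.norm_eq_abs]; exact hw i) (norm_nonneg _) two_ne_zero
    _ = Fintype.card ι * M ^ 2 := by simp

namespace Matrix

variable {ι : Type*} [Fintype ι] [DecidableEq ι]

theorem norm_le_mul_norm_toEuclideanCLM {𝕜 : Type*} [RCLike 𝕜] {A : Matrix ι ι 𝕜}
    (hA : IsUnit A.det) {C : ℝ} (hC : ‖toEuclideanCLM (𝕜 := 𝕜) A⁻¹‖ ≤ C)
    (x : EuclideanSpace 𝕜 ι) : ‖x‖ ≤ C * ‖toEuclideanCLM (𝕜 := 𝕜) A x‖ := by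
  have hx : toEuclideanCLM (𝕜 := 𝕜) A⁻¹ (toEuclideanCLM (𝕜 := 𝕜) A x) = x := by
    rw [← mul_apply_eq_comp, ← map_mul, nonsing_inv_mul A hA, map_one, one_apply_eq_self]
  calc ‖x‖ = ‖toEuclideanCLM (𝕜 := 𝕜) A⁻¹ (toEuclideanCLM (𝕜 := 𝕜) A x)‖ := by rw [hx]
    _ ≤ C * ‖toEuclideanCLM (𝕜 := 𝕜) A x‖ := ContinuousLinearMap.le_of_opNorm_le _ hC _

theorem toEuclideanCLM_apply_eq_inner_row (V : Matrix ι ι ℝ) (x : EuclideanSpace ℝ ι) (i : ι) :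
    toEuclideanCLM (𝕜 := ℝ) V x i = ⟪WithLp.toLp 2 (V i), x⟫ := by
  simp [PiLp.inner_apply, mulVec, dotProduct, mul_comm]

/-- The paper's `ω* = p + ½ V⁻¹ λ(V)`, where `λ(V)` collects the squared norms of the rows. -/
noncomputable def circumcenterOfRows (V : Matrix ι ι ℝ) (p : EuclideanSpace ℝ ι) :
    EuclideanSpace ℝ ι :=
  p + (1 / 2 : ℝ) • toEuclideanCLM (𝕜 := ℝ) V⁻¹ (WithLp.toLp 2 fun i => ‖WithLp.toLp 2 (V i)‖ ^ 2)

variable {V : Matrix ι ι ℝ} (hV : IsUnit V.det) (p : EuclideanSpace ℝ ι)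
include hV

theorem two_mul_inner_row_circumcenterOfRows_sub (i : ι) :
    2 * ⟪WithLp.toLp 2 (V i), circumcenterOfRows V p - p⟫ = ‖WithLp.toLp 2 (V i)‖ ^ 2 := by
  have hVV : toEuclideanCLM (𝕜 := ℝ) V (circumcenterOfRows V p - p) =
      (1 / 2 : ℝ) • WithLp.toLp 2 fun i => ‖WithLp.toLp 2 (V i)‖ ^ 2 := by
    rw [circumcenterOfRows, add_sub_cancel_left, map_smul, ← mul_apply_eq_comp, ← map_mul,
      mul_nonsing_inv V hV, map_one, one_apply_eq_self]
  rw [← toEuclideanCLM_apply_eq_inner_row, hVV]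
  simp

theorem norm_circumcenterOfRows_sub_add_row (i : ι) :
    ‖circumcenterOfRows V p - (p + WithLp.toLp 2 (V i))‖ = ‖circumcenterOfRows V p - p‖ :=
  norm_sub_eq_norm_sub_of_two_mul_inner_eq <| by
    rw [add_sub_cancel_left, two_mul_inner_row_circumcenterOfRows_sub hV]

theorem toEuclideanCLM_sub_circumcenterOfRows_apply (ω : EuclideanSpace ℝ ι) (i : ι) :
    toEuclideanCLM (𝕜 := ℝ) V (ω - circumcenterOfRows V p) i =
      (‖ω - p‖ ^ 2 - ‖ω - (p + WithLp.toLp 2 (V i))‖ ^ 2) / 2 := by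
  have hω := norm_sub_sq_eq_add_sub_inner ω p (p + WithLp.toLp 2 (V i))
  have hc := two_mul_inner_row_circumcenterOfRows_sub hV p i
  rw [add_sub_cancel_left] at hω
  rw [toEuclideanCLM_apply_eq_inner_row, show ω - circumcenterOfRows V p =
    (ω - p) - (circumcenterOfRows V p - p) by abel, inner_sub_right]
  linarith

end Matrix

theorem stmt_7_general (n : ℕ) (z : Fin (n + 1) → EuclideanSpace ℝ (Fin n))
    (ω : EuclideanSpace ℝ (Fin n)) (r C₁ C₂ : ℝ)
    (hC₁r : C₁ < r) (hC₂ : 0 < C₂)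
    (V : Matrix (Fin n) (Fin n) ℝ)
    (hV : ∀ k j, V k j = z k.castSucc j - z (Fin.last n) j)
    (hdet : IsUnit V.det)
    (hVinv : ‖Matrix.toEuclideanCLM (𝕜 := ℝ) V⁻¹‖ ≤ C₂)
    (happrox : ∀ k, r - C₁ < ‖z k - ω‖ ∧ ‖z k - ω‖ < r + C₁) :
    ∃ ωstar : EuclideanSpace ℝ (Fin n),
      (∀ j, ωstar j = (1 / 2) *
          (V⁻¹ *ᵥ (fun k => ‖z k.castSucc - z (Fin.last n)‖ ^ 2)) j + z (Fin.last n) j) ∧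
      (∀ i j : Fin (n + 1), ‖ωstar - z i‖ = ‖ωstar - z j‖) ∧
      ‖ω - ωstar‖ < 2 * Real.sqrt n * r * C₁ * C₂ := by
  obtain rfl | hn := eq_or_ne n 0
  · have h := (happrox 0).1
    rw [Subsingleton.elim (z 0 - ω) 0, norm_zero] at h
    linarith
  have : NeZero n := ⟨hn⟩
  have hrow : ∀ k, z k.castSucc = z (Fin.last n) + WithLp.toLp 2 (V k) := fun k => by
    ext j; simp [hV]
  have hmem : ∀ k, ‖ω - z k‖ ∈ Set.Ioo (r - C₁) (r + C₁) := fun k => by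
    rw [norm_sub_rev]; exact happrox k
  set c := Matrix.circumcenterOfRows V (z (Fin.last n))
  have hequi : ∀ i, ‖c - z i‖ = ‖c - z (Fin.last n)‖ := Fin.lastCases rfl fun k => by
    rw [hrow]; exact Matrix.norm_circumcenterOfRows_sub_add_row hdet _ k
  refine ⟨c, fun j => ?_, fun i j => by rw [hequi i, hequi j], ?_⟩
  · simp only [c, Matrix.circumcenterOfRows, Matrix.toEuclideanCLM_toLp, PiLp.add_apply,
      PiLp.smul_apply, smul_eq_mul, hrow, add_sub_cancel_left]
    ring
  have hcoord : ∀ k, |Matrix.toEuclideanCLM (𝕜 := ℝ) V (ω - c) k| < 2 * r * C₁ := fun k => by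
    rw [Matrix.toEuclideanCLM_sub_circumcenterOfRows_apply hdet, ← hrow, abs_div, abs_two]
    linarith [abs_sq_sub_sq_lt_of_mem_Ioo hC₁r.le (hmem (Fin.last n)) (hmem k.castSucc)]
  calc ‖ω - c‖ ≤ C₂ * ‖Matrix.toEuclideanCLM (𝕜 := ℝ) V (ω - c)‖ :=
        Matrix.norm_le_mul_norm_toEuclideanCLM hdet hVinv _
    _ < C₂ * (√(Fintype.card (Fin n)) * (2 * r * C₁)) := by
        gcongr
        exact EuclideanSpace.norm_lt_sqrt_card_mul_of_forall_abs_lt _ hcoord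
    _ = 2 * Real.sqrt n * r * C₁ * C₂ := by rw [Fintype.card_fin]; ring

/-- Suppose `z₀, …, zₙ ∈ ℝⁿ`, `ω ∈ ℝⁿ` and constants `0 < C₁ < r`, `C₂ > 0` satisfy
`r − C₁ < ‖zₖ − ω‖ < r + C₁` for all `k`, and the matrix `V` with rows
`vₖ = z_{k−1} − zₙ` is invertible with `‖V⁻¹‖ ≤ C₂`.  Then the points admit a
circumscribed sphere with center `ω* = (1/2)·V⁻¹·λ(V) + zₙ` and `‖ω − ω*‖ < 2√n·r·C₁·C₂`. -/
theorem stmt_7 (n : ℕ) (z : Fin (n + 1) → EuclideanSpace ℝ (Fin n))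
    (ω : EuclideanSpace ℝ (Fin n)) (r C₁ C₂ : ℝ)
    (hC₁ : 0 < C₁) (hC₁r : C₁ < r) (hC₂ : 0 < C₂)
    (V : Matrix (Fin n) (Fin n) ℝ)
    (hV : ∀ k j, V k j = z k.castSucc j - z (Fin.last n) j)
    (hdet : IsUnit V.det)
    (hVinv : ‖Matrix.toEuclideanCLM (𝕜 := ℝ) V⁻¹‖ ≤ C₂)
    (happrox : ∀ k, r - C₁ < ‖z k - ω‖ ∧ ‖z k - ω‖ < r + C₁) :
    ∃ ωstar : EuclideanSpace ℝ (Fin n),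
      (∀ j, ωstar j = (1 / 2) *
          (V⁻¹ *ᵥ (fun k => ‖z k.castSucc - z (Fin.last n)‖ ^ 2)) j + z (Fin.last n) j) ∧
      (∀ i j : Fin (n + 1), ‖ωstar - z i‖ = ‖ωstar - z j‖) ∧
      ‖ω - ωstar‖ < 2 * Real.sqrt n * r * C₁ * C₂ :=
  stmt_7_general n z ω r C₁ C₂ hC₁r hC₂ V hV hdet hVinv happrox
end

section
/- Let (L, d) be a proper geodesic metric space, X ⊆ L, and N ⊆ X a d₂-dense subset of X (every point of X lies within distance d₂ of a point of N). If x ∈ N and there exists r > d₂ such that the open ball B(x, r) ⊆ X, then the Voronoi cell C_L(x) = { y ∈ L : d(x, y) = inf_{z ∈ N} d(z, y) } is contained in X. -/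
/-- In a proper geodesic metric space `L`, if `N ⊆ X` is `d₂`-dense in `X`, `x ∈ N` and
`B(x, r) ⊆ X` for some `r > d₂`, then the Voronoi cell
`C_L(x) = { y : dist x y = infDist y N }` is contained in `X`. -/
theorem stmt_14 {L : Type*} [MetricSpace L] [ProperSpace L]
    (hgeo : ∀ p q : L, ∃ γ : ℝ → L, γ 0 = p ∧ γ (dist p q) = q ∧
      ∀ s ∈ Set.Icc (0 : ℝ) (dist p q), ∀ t ∈ Set.Icc (0 : ℝ) (dist p q),
        dist (γ s) (γ t) = |s - t|)
    (X N : Set L) (hNX : N ⊆ X) (d₂ r : ℝ) (hd₂ : 0 < d₂)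
    (hdense : ∀ p ∈ X, ∃ q ∈ N, dist p q ≤ d₂)
    (x : L) (hx : x ∈ N) (hr : d₂ < r) (hball : Metric.ball x r ⊆ X) :
    {y : L | dist x y = Metric.infDist y N} ⊆ X := by
  intro y hy
  simp only [Set.mem_setOf_eq] at hy
  set D := dist x y with hD
  by_cases hDr : D < r
  · exact hball (by simpa [Metric.mem_ball, dist_comm] using hDr)
  push_neg at hDr
  exfalso
  obtain ⟨γ, hγ0, hγD, hγiso⟩ := hgeo x y
  set t : ℝ := (d₂ + r) / 2 with ht
  have htpos : 0 < t := by linarith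
  have htd₂ : d₂ < t := by linarith
  have htr : t < r := by linarith
  have htD : t ≤ D := le_trans htr.le hDr
  have ht_mem : t ∈ Set.Icc (0 : ℝ) D := ⟨htpos.le, htD⟩
  have h0_mem : (0 : ℝ) ∈ Set.Icc (0 : ℝ) D := ⟨le_refl _, le_trans (by linarith) hDr⟩
  have hD_mem : D ∈ Set.Icc (0 : ℝ) D := ⟨le_trans (by linarith) hDr, le_refl _⟩
  have hxt : dist x (γ t) = t := by
    have := hγiso 0 h0_mem t ht_mem
    rw [hγ0] at this
    rw [this]
    rw [abs_of_nonpos (by linarith)]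
    ring
  have hmemX : γ t ∈ X := hball (by simp [Metric.mem_ball, dist_comm, hxt, htr])
  obtain ⟨z, hzN, hz⟩ := hdense (γ t) hmemX
  have h1 : Metric.infDist y N ≤ dist y z := Metric.infDist_le_dist_of_mem hzN
  have h2 : dist y z ≤ dist y (γ t) + dist (γ t) z := dist_triangle _ _ _
  have h3 : dist y (γ t) = D - t := by
    have := hγiso D hD_mem t ht_mem
    rw [hγD] at this
    rw [this, abs_of_nonneg (by linarith)]
  rw [← hy] at h1
  rw [h3] at h2
  linarith
end

section
/- Let ω, ω' ∈ ℝⁿ and points z₀, …, zₙ ∈ ℝⁿ such that ‖zₖ − ω'‖ = r' for all k (ω' is a circumscribed center with radius r') and r − C₁ < ‖zₖ − ω‖ < r + C₁ for all k with 0 < C₁ < r. Then for each 1 ≤ k ≤ n, the vector ζ = ω − zₙ satisfies |vₖ·vₖ − 2 vₖ·ζ| < 4rC₁, where vₖ = z_{k−1} − zₙ. -/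
open scoped RealInnerProductSpace

/-- If `ω'` is an exact circumscribed center of radius `r'` for `z₀, …, zₙ ∈ ℝⁿ` and `ω`
is an approximate center, `r − C₁ < ‖zₖ − ω‖ < r + C₁` for all `k` with `0 < C₁ < r`, then
for each `1 ≤ k ≤ n` the vector `ζ = ω − zₙ` satisfies `|vₖ·vₖ − 2 vₖ·ζ| < 4rC₁`, where
`vₖ = z_{k−1} − zₙ`. -/
theorem stmt_18 (n : ℕ) (z : Fin (n + 1) → EuclideanSpace ℝ (Fin n))
    (ω ω' : EuclideanSpace ℝ (Fin n)) (r r' C₁ : ℝ)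
    (hC₁ : 0 < C₁) (hC₁r : C₁ < r)
    (hsphere : ∀ k, ‖z k - ω'‖ = r')
    (happrox : ∀ k, r - C₁ < ‖z k - ω‖ ∧ ‖z k - ω‖ < r + C₁) :
    ∀ k : Fin n,
      |⟪z k.castSucc - z (Fin.last n), z k.castSucc - z (Fin.last n)⟫ -
          2 * ⟪z k.castSucc - z (Fin.last n), ω - z (Fin.last n)⟫| < 4 * r * C₁ := by
  intro k
  set v := z k.castSucc - z (Fin.last n) with hv
  set ζ := ω - z (Fin.last n) with hζ
  obtain ⟨h1, h2⟩ := happrox k.castSucc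
  obtain ⟨h3, h4⟩ := happrox (Fin.last n)
  have hvz : z k.castSucc - ω = v - ζ := by rw [hv, hζ]; abel
  have hnz : z (Fin.last n) - ω = -ζ := by rw [hζ]; abel
  rw [hvz] at h1 h2
  rw [hnz, norm_neg] at h3 h4
  have key : ⟪v, v⟫ - 2 * ⟪v, ζ⟫ = ‖v - ζ‖ ^ 2 - ‖ζ‖ ^ 2 := by
    rw [norm_sub_sq_real, real_inner_self_eq_norm_sq]; ring
  rw [key]
  have hζ0 : 0 ≤ ‖ζ‖ := norm_nonneg _
  have hvζ0 : 0 ≤ ‖v - ζ‖ := norm_nonneg _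
  rw [abs_lt]
  constructor <;> nlinarith [sq_nonneg (‖v - ζ‖ - ‖ζ‖)]
end
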